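/- arXiv:1803.01765 — 2 statements merged into one kernel-verified Lean document; each statement's English description precedes it below -/
import Mathlib

section
/- Let n ≥ 2 be an integer and let V : ℕ → ℕ satisfy V(i+1) ≤ V(i) ≤ V(i+1) + 1 for all i. Define d : ℕ → ℚ by d(i) = ((2i − n)^2 − n)/(4n) − 2·max(V(i), V(n − i)). Then for every i with 0 ≤ i ≤ n − 1 the following hold: (a) if 2i ≤ n − 2, then d(i) − d(i+1) equals (n − 2i − 1)/n or (−n − 2i − 1)/n; (b) if n is odd and 2i + 1 = n, then d(i) − d(i+1) = 0; (c) if n ≤ 2i, then d(i) − d(i+1) equals (n − 2i − 1)/n or (3n − 2i − 1)/n. -/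
/-!
Write `d i = q i - 2 W i` with `q i = ((2i - n)² - n) / 4n` and `W i = max (V i) (V (n - i))`.
The quadratic part always drops by `q i - q (i + 1) = (n - 2i - 1) / n`. Since `V` is
antitone, `W i = V i` on the lower half `2i ≤ n`, so there `W` drops by `0` or `1` at each
step; and `W (n - i) = W i` reflects this into rises by `0` or `1` on the upper half.
At the middle step `2i + 1 = n` both parts vanish.
-/

def niWuMax (V : ℕ → ℕ) (n i : ℕ) : ℕ := max (V i) (V (n - i))

section niWuMax

variable {V : ℕ → ℕ} {n i : ℕ}

theorem niWuMax_sub_eq (h : i ≤ n) : niWuMax V n (n - i) = niWuMax V n i := by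
  rw [niWuMax, niWuMax, Nat.sub_sub_self h, max_comm]

theorem niWuMax_eq_left (hV : Antitone V) (h : 2 * i ≤ n) : niWuMax V n i = V i :=
  max_eq_left (hV (by omega))

theorem niWuMax_succ_eq_of_two_mul_add_one_eq (h : 2 * i + 1 = n) :
    niWuMax V n (i + 1) = niWuMax V n i := by
  rw [niWuMax, niWuMax, show n - (i + 1) = i by omega, show n - i = i + 1 by omega, max_comm]

theorem niWuMax_step_of_two_mul_lt (hV : ∀ i, V (i + 1) ≤ V i ∧ V i ≤ V (i + 1) + 1)
    (h : 2 * i < n) :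
    niWuMax V n i = niWuMax V n (i + 1) ∨ niWuMax V n i = niWuMax V n (i + 1) + 1 := by
  rcases (show 2 * i + 1 = n ∨ 2 * (i + 1) ≤ n by omega) with hmid | hlow
  · exact .inl (niWuMax_succ_eq_of_two_mul_add_one_eq hmid).symm
  · have hanti : Antitone V := antitone_nat_of_succ_le fun k => (hV k).1
    rw [niWuMax_eq_left hanti (by omega), niWuMax_eq_left hanti hlow]
    have := hV i
    omega

theorem niWuMax_step_of_le_two_mul (hV : ∀ i, V (i + 1) ≤ V i ∧ V i ≤ V (i + 1) + 1)
    (hi : i < n) (h : n ≤ 2 * i) :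
    niWuMax V n (i + 1) = niWuMax V n i ∨ niWuMax V n (i + 1) = niWuMax V n i + 1 := by
  have hreflect := niWuMax_sub_eq (V := V) (show n - (i + 1) + 1 ≤ n by omega)
  rw [show n - (n - (i + 1) + 1) = i by omega] at hreflect
  rw [← niWuMax_sub_eq (V := V) (show i + 1 ≤ n by omega), hreflect]
  exact niWuMax_step_of_two_mul_lt hV (by omega)

end niWuMax

theorem quadratic_sub_succ {n : ℕ} (hn : (n : ℚ) ≠ 0) (i : ℕ) :
    ((2 * (i : ℚ) - n) ^ 2 - n) / (4 * n) - ((2 * ((i + 1 : ℕ) : ℚ) - n) ^ 2 - n) / (4 * n)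
      = ((n : ℚ) - 2 * i - 1) / n := by
  push_cast
  field_simp
  ring

theorem sub_succ_eq_of_niWu {n : ℕ} (hn : (n : ℚ) ≠ 0) {V : ℕ → ℕ} {d : ℕ → ℚ}
    (hd : ∀ i, d i = ((2 * (i : ℚ) - n) ^ 2 - n) / (4 * n)
      - 2 * (max (V i) (V (n - i)) : ℚ)) (i : ℕ) :
    d i - d (i + 1) = ((n : ℚ) - 2 * i - 1) / n
      - 2 * ((niWuMax V n i : ℚ) - niWuMax V n (i + 1)) := by
  rw [hd, hd, ← quadratic_sub_succ hn i, niWuMax, niWuMax]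
  push_cast
  ring

/-- Arithmetic content of the lemma that `S³_n(K)` satisfies the spine obstruction:
case equations for differences of consecutive Ni–Wu style correction terms. -/
theorem spine_obstruction_cases (n : ℕ) (hn : 2 ≤ n) (V : ℕ → ℕ)
    (hV : ∀ i, V (i + 1) ≤ V i ∧ V i ≤ V (i + 1) + 1)
    (d : ℕ → ℚ)
    (hd : ∀ i, d i = ((2 * (i : ℚ) - n) ^ 2 - n) / (4 * n)
      - 2 * (max (V i) (V (n - i)) : ℚ)) :
    ∀ i ≤ n - 1,
      (2 * i ≤ n - 2 →
        d i - d (i + 1) = ((n : ℚ) - 2 * i - 1) / n ∨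
        d i - d (i + 1) = (-(n : ℚ) - 2 * i - 1) / n) ∧
      (Odd n → 2 * i + 1 = n → d i - d (i + 1) = 0) ∧
      (n ≤ 2 * i →
        d i - d (i + 1) = ((n : ℚ) - 2 * i - 1) / n ∨
        d i - d (i + 1) = (3 * (n : ℚ) - 2 * i - 1) / n) := by
  have hn0 : (n : ℚ) ≠ 0 := Nat.cast_ne_zero.mpr (by omega)
  intro i hi
  rw [sub_succ_eq_of_niWu hn0 hd i]
  refine ⟨fun hlow => ?_, fun _ hmid => ?_, fun hup => ?_⟩
  · rcases niWuMax_step_of_two_mul_lt hV (by omega : 2 * i < n) with h | h <;> rw [h]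
    · simp
    · right; push_cast; field_simp; ring
  · have hn' : (n : ℚ) = 2 * i + 1 := by exact_mod_cast hmid.symm
    rw [niWuMax_succ_eq_of_two_mul_add_one_eq hmid, hn']
    ring
  · rcases niWuMax_step_of_le_two_mul hV (by omega) hup with h | h <;> rw [h]
    · simp
    · right; push_cast; field_simp; ring
end

section
/- Let p, p', q, q', r, r', e, a, b be integers with gcd(q, r) = 1 and |b·p − a·p'| = 1. Let G be the group presented on four generators x, y, z, h with relations: h commutes with x, h commutes with y, h commutes with z, x^p·h^{p'} = 1, y^q·h^{q'} = 1, z^r·h^{r'} = 1, x·y·z·h^e = 1, and x^a·h^b = 1. Then G is the trivial group. -/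
/-! Killing the fiber `x^a h^b` kills `x` and `h`: from `x^p h^{p'} = 1` and `x^a h^b = 1`
both `x^{bp - ap'}` and `h^{bp - ap'}` are trivial, and the exponent is `±1`. The remaining
relations then read `y^q = z^r = yz = 1`, so `y = z⁻¹` has order dividing `gcd(q, r) = 1`. -/

section Group

variable {G : Type*} [Group G]

lemma eq_one_of_zpow_eq_one_of_abs_eq_one {g : G} {n : ℤ} (hn : |n| = 1) (hg : g ^ n = 1) :
    g = 1 := by
  rcases abs_eq zero_le_one |>.mp hn with rfl | rfl <;> simpa using hg

lemma zpow_det_eq_one {x h : G} {p p' a b : ℤ} (h₁ : x ^ p * h ^ p' = 1)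
    (h₂ : x ^ a * h ^ b = 1) : x ^ (b * p - a * p') = 1 := by
  have key : x ^ (b * p) = x ^ (a * p') :=
    calc x ^ (b * p) = (x ^ p) ^ b := by rw [mul_comm, zpow_mul]
      _ = (h ^ p')⁻¹ ^ b := by rw [eq_inv_of_mul_eq_one_left h₁]
      _ = (h ^ b)⁻¹ ^ p' := by rw [inv_zpow, inv_zpow, ← zpow_mul, ← zpow_mul, mul_comm]
      _ = (x ^ a) ^ p' := by rw [eq_inv_of_mul_eq_one_left h₂]
      _ = x ^ (a * p') := (zpow_mul x a p').symm
  rw [zpow_sub, key, mul_inv_cancel]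

lemma eq_one_of_mul_zpow_eq_one_of_abs_det_eq_one {x h : G} {p p' a b : ℤ}
    (h₁ : x ^ p * h ^ p' = 1) (h₂ : x ^ a * h ^ b = 1) (hdet : |b * p - a * p'| = 1) :
    x = 1 ∧ h = 1 := by
  refine ⟨eq_one_of_zpow_eq_one_of_abs_eq_one hdet (zpow_det_eq_one h₁ h₂), ?_⟩
  refine eq_one_of_zpow_eq_one_of_abs_eq_one (n := a * p' - b * p) ?_ ?_
  · rwa [abs_sub_comm]
  · exact zpow_det_eq_one (mul_eq_one_comm.mp h₁) (mul_eq_one_comm.mp h₂)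

lemma eq_one_of_mul_eq_one_of_gcd_eq_one {y z : G} {q r : ℤ} (hqr : Int.gcd q r = 1)
    (hy : y ^ q = 1) (hz : z ^ r = 1) (hyz : y * z = 1) : y = 1 ∧ z = 1 := by
  have hzy : z = y⁻¹ := eq_inv_of_mul_eq_one_right hyz
  have hyr : y ^ r = 1 := by rwa [hzy, inv_zpow, inv_eq_one] at hz
  have hy1 : y = 1 := by simpa [hqr] using pow_intGCD_eq_one.mpr ⟨hy, hyr⟩
  exact ⟨hy1, by rw [hzy, hy1, inv_one]⟩

lemma seifert_generators_eq_one {x y z h : G} {p p' q q' r r' e a b : ℤ}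
    (hqr : Int.gcd q r = 1) (hdet : |b * p - a * p'| = 1)
    (hx : x ^ p * h ^ p' = 1) (hy : y ^ q * h ^ q' = 1) (hz : z ^ r * h ^ r' = 1)
    (hxyz : x * y * z * h ^ e = 1) (hfiber : x ^ a * h ^ b = 1) :
    x = 1 ∧ y = 1 ∧ z = 1 ∧ h = 1 := by
  obtain ⟨rfl, rfl⟩ := eq_one_of_mul_zpow_eq_one_of_abs_det_eq_one hx hfiber hdet
  simp only [one_zpow, mul_one, one_mul] at hy hz hxyz
  obtain ⟨rfl, rfl⟩ := eq_one_of_mul_eq_one_of_gcd_eq_one hqr hy hz hxyz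
  exact ⟨rfl, rfl, rfl, rfl⟩

end Group

lemma PresentedGroup.eq_one_of_forall_of_eq_one {α : Type*} {rels : Set (FreeGroup α)}
    (hof : ∀ i : α, (PresentedGroup.of i : PresentedGroup rels) = 1) (g : PresentedGroup rels) :
    g = 1 :=
  DFunLike.congr_fun (PresentedGroup.ext (φ := MonoidHom.id _) (ψ := 1) hof) g

lemma PresentedGroup.eq_one_of_seifert_relators_mem {rels : Set (FreeGroup (Fin 4))} {p p' q q' r r' e a b : ℤ}
    (hqr : Int.gcd q r = 1) (hdet : |b * p - a * p'| = 1)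
    (hx : FreeGroup.of 0 ^ p * FreeGroup.of 3 ^ p' ∈ rels)
    (hy : FreeGroup.of 1 ^ q * FreeGroup.of 3 ^ q' ∈ rels)
    (hz : FreeGroup.of 2 ^ r * FreeGroup.of 3 ^ r' ∈ rels)
    (hxyz : FreeGroup.of 0 * FreeGroup.of 1 * FreeGroup.of 2 * FreeGroup.of 3 ^ e ∈ rels)
    (hfiber : FreeGroup.of 0 ^ a * FreeGroup.of 3 ^ b ∈ rels) (g : PresentedGroup rels) :
    g = 1 := by
  have rel {w : FreeGroup (Fin 4)} (hw : w ∈ rels) : PresentedGroup.mk rels w = 1 :=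
    PresentedGroup.one_of_mem hw
  obtain ⟨hx, hy, hz, hh⟩ := seifert_generators_eq_one hqr hdet
    (by simpa only [map_mul, map_zpow] using rel hx)
    (by simpa only [map_mul, map_zpow] using rel hy)
    (by simpa only [map_mul, map_zpow] using rel hz)
    (by simpa only [map_mul, map_zpow] using rel hxyz)
    (by simpa only [map_mul, map_zpow] using rel hfiber)
  refine PresentedGroup.eq_one_of_forall_of_eq_one (fun i => ?_) g
  fin_cases i
  exacts [hx, hy, hz, hh]

/-- Killing a singular fiber in the Seifert presentation of `π₁(Σ(p,q,r))`:
the quotient of `⟨x, y, z, h ∣ h central, x^p h^{p'} = y^q h^{q'} = z^r h^{r'}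
= xyzh^e = 1⟩` by the normal closure of `x^a h^b` (with `|bp − ap'| = 1` and
`gcd(q, r) = 1`) is the trivial group.  Generators: `x = 0, y = 1, z = 2, h = 3`. -/
theorem seifert_quotient_trivial (p p' q q' r r' e a b : ℤ)
    (hqr : Int.gcd q r = 1) (hdet : |b * p - a * p'| = 1) :
    ∀ g : PresentedGroup
      ({ FreeGroup.of 3 * FreeGroup.of 0 * (FreeGroup.of 3)⁻¹ * (FreeGroup.of 0)⁻¹,
         FreeGroup.of 3 * FreeGroup.of 1 * (FreeGroup.of 3)⁻¹ * (FreeGroup.of 1)⁻¹,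
         FreeGroup.of 3 * FreeGroup.of 2 * (FreeGroup.of 3)⁻¹ * (FreeGroup.of 2)⁻¹,
         FreeGroup.of 0 ^ p * FreeGroup.of 3 ^ p',
         FreeGroup.of 1 ^ q * FreeGroup.of 3 ^ q',
         FreeGroup.of 2 ^ r * FreeGroup.of 3 ^ r',
         FreeGroup.of 0 * FreeGroup.of 1 * FreeGroup.of 2 * FreeGroup.of 3 ^ e,
         FreeGroup.of 0 ^ a * FreeGroup.of 3 ^ b } : Set (FreeGroup (Fin 4))),
      g = 1 :=
  PresentedGroup.eq_one_of_seifert_relators_mem (q' := q') (r' := r') (e := e) hqr hdet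
    (by simp) (by simp) (by simp) (by simp) (by simp)
end
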